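/- In the Empty graph (i.i.d. sentiments) model with external influence h ∈ ℝ, if the supermajority threshold satisfies S ≠ tanh(h), then the detection error probability decays exponentially: limsup_{n→∞} (1/n) log P_e^{(n)} < 0 (in particular lim_{n→∞} P_e^{(n)} = 0). -/

import Mathlib

open MeasureTheory Filter Real

/-!
A detection error forces one of the empirical means `X̄ₙ`, `Ȳₙ` onto the wrong side of its
threshold (`S`, resp. `(1 - 2p)S`) as seen from its true mean (`tanh h`, resp.
`(1 - 2p) tanh h`). The pairs `(Xᵢ, Yᵢ)` are i.i.d., so by Chernoff's bound each of these
deviations has probability at most `cⁿ` for some `c < 1`, whence `P_e⁽ⁿ⁾ ≤ 2cⁿ`.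
-/

open Finset

section Chernoff

variable {α : Type*} [Fintype α] {w : α → ℝ}

lemma exists_lt_lt_of_hasDerivAt_neg {f : ℝ → ℝ} {f' x : ℝ} (hf : HasDerivAt f f' x)
    (hf' : f' < 0) : ∃ y, x < y ∧ f y < f x := by
  obtain ⟨y, hslope, hxy⟩ := ((hf.hasDerivWithinAt (s := Set.Ioi x)).limsup_slope_le'
    (lt_irrefl x) hf').and self_mem_nhdsWithin |>.exists
  refine ⟨y, hxy, ?_⟩
  rw [slope_def_field, div_neg_iff] at hslope
  rcases hslope with ⟨-, h⟩ | ⟨h, -⟩ <;> linarith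

lemma sum_prod_le_pow_sum_exp_mul (hw : ∀ a, 0 ≤ w a) (v : α → ℝ) {n : ℕ}
    (B : Finset (Fin n → α)) (hB : ∀ s ∈ B, 0 ≤ ∑ i, v (s i)) :
    ∑ s ∈ B, ∏ i, w (s i) ≤ (∑ a, exp (v a) * w a) ^ n := by
  have htilt : ∀ s ∈ B, ∏ i, w (s i) ≤ ∏ i, exp (v (s i)) * w (s i) := fun s hs => by
    rw [prod_mul_distrib, ← exp_sum]
    exact le_mul_of_one_le_left (prod_nonneg fun i _ => hw _) (one_le_exp (hB s hs))
  calc ∑ s ∈ B, ∏ i, w (s i) ≤ ∑ s ∈ B, ∏ i, exp (v (s i)) * w (s i) := sum_le_sum htilt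
    _ ≤ ∑ s : Fin n → α, ∏ i, exp (v (s i)) * w (s i) :=
      sum_le_sum_of_subset_of_nonneg (subset_univ B)
        fun s _ _ => prod_nonneg fun i _ => mul_nonneg (exp_pos _).le (hw _)
    _ = (∑ a, exp (v a) * w a) ^ n := (Fintype.sum_pow (fun a => exp (v a) * w a) n).symm

lemma sum_exp_mul_pos (hw0 : ∀ a, 0 ≤ w a) (hw1 : ∑ a, w a = 1) (v : α → ℝ) :
    0 < ∑ a, exp (v a) * w a := by
  obtain ⟨a, -, ha⟩ := exists_lt_of_sum_lt (s := univ) (f := 0) (g := w) (by simp [hw1])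
  exact sum_pos' (fun b _ => mul_nonneg (exp_pos _).le (hw0 b))
    ⟨a, mem_univ a, mul_pos (exp_pos _) ha⟩

/-- The tilted moment generating function `τ ↦ ∑ exp (τ (t - f)) w` equals `1` at `0`, with
slope `t - 𝔼 f < 0` there, so it drops below `1` for some `τ > 0`. -/
lemma exists_pos_sum_exp_mul_lt_one (hw1 : ∑ a, w a = 1) {f : α → ℝ} {t : ℝ}
    (ht : t < ∑ a, f a * w a) :
    ∃ τ, 0 < τ ∧ ∑ a, exp (τ * (t - f a)) * w a < 1 := by
  have hderiv : HasDerivAt (fun τ => ∑ a, exp (τ * (t - f a)) * w a)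
      (∑ a, (t - f a) * w a) 0 := by
    refine HasDerivAt.fun_sum fun a _ => ?_
    simpa using (((hasDerivAt_id (0 : ℝ)).mul_const (t - f a)).exp).mul_const (w a)
  have hslope : ∑ a, (t - f a) * w a < 0 := by
    simp only [sub_mul, sum_sub_distrib, ← mul_sum, hw1, mul_one]
    linarith
  obtain ⟨τ, hτ, hlt⟩ := exists_lt_lt_of_hasDerivAt_neg hderiv hslope
  exact ⟨τ, hτ, by simpa [hw1] using hlt⟩

lemma exists_lt_one_sum_prod_le_pow_of_lt (hw0 : ∀ a, 0 ≤ w a) (hw1 : ∑ a, w a = 1)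
    {f : α → ℝ} {t : ℝ} (ht : t < ∑ a, f a * w a) :
    ∃ c, 0 < c ∧ c < 1 ∧ ∀ n (B : Finset (Fin n → α)),
      (∀ s ∈ B, ∑ i, f (s i) ≤ t * n) → ∑ s ∈ B, ∏ i, w (s i) ≤ c ^ n := by
  obtain ⟨τ, hτ, hc⟩ := exists_pos_sum_exp_mul_lt_one hw1 ht
  refine ⟨_, sum_exp_mul_pos hw0 hw1 _, hc, fun n B hB => ?_⟩
  refine sum_prod_le_pow_sum_exp_mul hw0 _ B fun s hs => ?_
  rw [← mul_sum, sum_sub_distrib, sum_const, card_univ, Fintype.card_fin, nsmul_eq_mul]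
  exact mul_nonneg hτ.le (by linarith [hB s hs])

lemma exists_lt_one_sum_prod_le_pow_of_ne (hw0 : ∀ a, 0 ≤ w a) (hw1 : ∑ a, w a = 1)
    {f : α → ℝ} {t : ℝ} (ht : t ≠ ∑ a, f a * w a) :
    ∃ c, 0 < c ∧ c < 1 ∧ ∀ n (B : Finset (Fin n → α)),
      (∀ s ∈ B, (∑ i, f (s i) - t * n) * (∑ a, f a * w a - t) ≤ 0) →
        ∑ s ∈ B, ∏ i, w (s i) ≤ c ^ n := by
  rcases ht.lt_or_gt with hlt | hgt
  · obtain ⟨c, hc0, hc1, hc⟩ := exists_lt_one_sum_prod_le_pow_of_lt hw0 hw1 hlt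
    refine ⟨c, hc0, hc1, fun n B hB => hc n B fun s hs => ?_⟩
    have := hB s hs
    nlinarith
  · have hneg : -t < ∑ a, -f a * w a := by simpa [neg_mul, sum_neg_distrib] using hgt
    obtain ⟨c, hc0, hc1, hc⟩ := exists_lt_one_sum_prod_le_pow_of_lt hw0 hw1 hneg
    refine ⟨c, hc0, hc1, fun n B hB => hc n B fun s hs => ?_⟩
    have := hB s hs
    simp only [sum_neg_distrib]
    nlinarith

end Chernoff

lemma sum_sub_mul_eq_mul_mean_sub {n : ℕ} (x : Fin n → ℝ) (t : ℝ) :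
    ∑ i, x i - t * n = n * ((∑ i, x i) / n - t) := by
  rcases n.eq_zero_or_pos with rfl | hn
  · simp
  · field_simp

lemma mul_nonpos_or_mul_nonpos_of_mul_neg {a b d e : ℝ} (hab : a * b < 0) (hde : 0 < d * e) :
    a * d ≤ 0 ∨ b * e ≤ 0 := by
  by_contra! h
  nlinarith [mul_pos h.1 h.2]

lemma measure_preimage_le_sum_of_forall_mem {Ω γ ι : Type*} [MeasurableSpace Ω]
    (μ : Measure Ω) {Z : Ω → γ} {g : ι → γ} (hZ : ∀ ω, Z ω ∈ Set.range g) {A : Set γ}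
    (B : Finset ι) (hB : ∀ s, g s ∈ A → s ∈ B) :
    μ (Z ⁻¹' A) ≤ ∑ s ∈ B, μ (Z ⁻¹' {g s}) := by
  refine (measure_mono fun ω hω => ?_).trans (measure_biUnion_finset_le B _)
  obtain ⟨s, hs⟩ := hZ ω
  exact Set.mem_biUnion (hB s (hs ▸ hω)) hs.symm

lemma limsup_inv_mul_log_le_log {u : ℕ → ENNReal} {C c : ℝ} (hC : 0 < C) (hc : 0 < c)
    (hu : ∀ n, u n ≤ ENNReal.ofReal (C * c ^ n)) :
    limsup (fun n : ℕ => (((n : ℝ)⁻¹ : ℝ) : EReal) * ENNReal.log (u n)) atTop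
      ≤ Real.log c := by
  have hbound : ∀ n : ℕ, 0 < n → (((n : ℝ)⁻¹ : ℝ) : EReal) * ENNReal.log (u n)
      ≤ ((Real.log C / n + Real.log c : ℝ) : EReal) := fun n hn => by
    calc (((n : ℝ)⁻¹ : ℝ) : EReal) * ENNReal.log (u n)
        ≤ (((n : ℝ)⁻¹ : ℝ) : EReal) * ((Real.log (C * c ^ n) : ℝ) : EReal) := by
          refine mul_le_mul_of_nonneg_left ?_ (EReal.coe_nonneg.mpr (by positivity))
          rw [← ENNReal.log_ofReal_of_pos (by positivity)]
          exact ENNReal.log_monotone (hu n)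
      _ = ((Real.log C / n + Real.log c : ℝ) : EReal) := by
          rw [← EReal.coe_mul, Real.log_mul hC.ne' (pow_pos hc n).ne', Real.log_pow]
          congr 1
          field_simp
  have hlim : Tendsto (fun n : ℕ => ((Real.log C / n + Real.log c : ℝ) : EReal)) atTop
      (nhds (Real.log c)) :=
    (continuous_coe_real_ereal.tendsto _).comp <| by
      simpa using (tendsto_const_div_atTop_nhds_zero_nat (Real.log C)).add_const (Real.log c)
  exact (limsup_le_limsup (eventually_gt_atTop 0 |>.mono hbound)).trans_eq hlim.limsup_eq

def boolSign (b : Bool) : ℝ := if b then 1 else -1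

lemma boolSign_injective : Function.Injective boolSign := by
  intro a b
  cases a <;> cases b <;> norm_num [boolSign]

lemma boolSign_eq_one_or_eq_neg_one (b : Bool) : boolSign b = 1 ∨ boolSign b = -1 := by
  cases b <;> simp [boolSign]

lemma boolSign_decide_eq_one {x : ℝ} (hx : x = 1 ∨ x = -1) : boolSign (decide (x = 1)) = x := by
  rcases hx with rfl | rfl <;> norm_num [boolSign]

/-- The law of one pair `(X i, Y i)`, with `±1` encoded by `Bool`. -/
noncomputable def pairWeight (p h : ℝ) (a : Bool × Bool) : ℝ :=
  exp (h * boolSign a.1) / (exp h + exp (-h)) *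
    if a.2 = a.1 then 1 - p else p

section PairWeight

variable {p : ℝ} (h : ℝ)

lemma pairWeight_nonneg (hp0 : 0 ≤ p) (hp1 : p ≤ 1) (a : Bool × Bool) :
    0 ≤ pairWeight p h a :=
  mul_nonneg (by positivity) (by split_ifs <;> linarith)

lemma sum_pairWeight : ∑ a, pairWeight p h a = 1 := by
  have : exp h + exp (-h) ≠ 0 := by positivity
  simp only [Fintype.sum_prod_type, Fintype.sum_bool, pairWeight, boolSign, ↓reduceIte,
    Bool.true_eq_false, Bool.false_eq_true]
  field_simp
  ring

lemma sum_boolSign_fst_mul_pairWeight : ∑ a, boolSign a.1 * pairWeight p h a = tanh h := by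
  have : exp h + exp (-h) ≠ 0 := by positivity
  simp only [Fintype.sum_prod_type, Fintype.sum_bool, pairWeight, boolSign, ↓reduceIte,
    Bool.true_eq_false, Bool.false_eq_true, tanh_eq_sinh_div_cosh, sinh_eq, cosh_eq]
  field_simp
  ring

lemma sum_boolSign_snd_mul_pairWeight :
    ∑ a, boolSign a.2 * pairWeight p h a = (1 - 2 * p) * tanh h := by
  have : exp h + exp (-h) ≠ 0 := by positivity
  simp only [Fintype.sum_prod_type, Fintype.sum_bool, pairWeight, boolSign, ↓reduceIte,
    Bool.true_eq_false, Bool.false_eq_true, tanh_eq_sinh_div_cosh, sinh_eq, cosh_eq]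
  field_simp
  ring

end PairWeight

def IsDetectionError (p S : ℝ) {n : ℕ} (x y : Fin n → ℝ) : Prop :=
  ((∑ i, x i) / n - S) * ((∑ i, y i) / n - (1 - 2 * p) * S) < 0

/-- The two thresholds `S`, `(1 - 2p)S` lie on the same side of the respective means `tanh h`,
`(1 - 2p) tanh h`, so a detection error puts `X̄ₙ` or `Ȳₙ` on the wrong side of its threshold. -/
lemma exists_lt_one_sum_prod_pairWeight_le {p S : ℝ} (h : ℝ) (hp0 : 0 < p) (hp1 : p < 1 / 2)
    (hSh : S ≠ tanh h) :
    ∃ c, 0 < c ∧ c < 1 ∧ ∀ n (B : Finset (Fin n → Bool × Bool)),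
      (∀ s ∈ B, IsDetectionError p S (fun i => boolSign (s i).1) (fun i => boolSign (s i).2)) →
        ∑ s ∈ B, ∏ i, pairWeight p h (s i) ≤ 2 * c ^ n := by
  have hw0 := pairWeight_nonneg h hp0.le (by linarith)
  have hw1 := sum_pairWeight (p := p) h
  have hp2 : 0 < 1 - 2 * p := by linarith
  obtain ⟨c₁, hc₁0, hc₁1, hc₁⟩ := exists_lt_one_sum_prod_le_pow_of_ne hw0 hw1
    (f := fun a => boolSign a.1) (by rwa [sum_boolSign_fst_mul_pairWeight])
  obtain ⟨c₂, hc₂0, hc₂1, hc₂⟩ := exists_lt_one_sum_prod_le_pow_of_ne hw0 hw1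
    (f := fun a => boolSign a.2) (t := (1 - 2 * p) * S)
    (by rw [sum_boolSign_snd_mul_pairWeight]; exact (mul_right_injective₀ hp2.ne').ne hSh)
  rw [sum_boolSign_fst_mul_pairWeight] at hc₁
  rw [sum_boolSign_snd_mul_pairWeight] at hc₂
  refine ⟨max c₁ c₂, lt_max_of_lt_left hc₁0, max_lt hc₁1 hc₂1, fun n B hB => ?_⟩
  classical
  set wrongX := fun s : Fin n → Bool × Bool =>
    (∑ i, boolSign (s i).1 - S * n) * (tanh h - S) ≤ 0
  have hwrongY : ∀ s ∈ B.filter (¬ wrongX ·),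
      (∑ i, boolSign (s i).2 - (1 - 2 * p) * S * n) * ((1 - 2 * p) * tanh h - (1 - 2 * p) * S)
        ≤ 0 := by
    intro s hs
    rw [mem_filter] at hs
    have hde : 0 < (tanh h - S) * ((1 - 2 * p) * tanh h - (1 - 2 * p) * S) := by
      have : 0 < (tanh h - S) ^ 2 := by positivity [sub_ne_zero.mpr hSh.symm]
      nlinarith
    rcases mul_nonpos_or_mul_nonpos_of_mul_neg (hB s hs.1) hde with hX | hY
    · refine absurd ?_ hs.2
      simp only [wrongX, sum_sub_mul_eq_mul_mean_sub, mul_assoc]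
      exact mul_nonpos_of_nonneg_of_nonpos n.cast_nonneg hX
    · rw [sum_sub_mul_eq_mul_mean_sub, mul_assoc]
      exact mul_nonpos_of_nonneg_of_nonpos n.cast_nonneg hY
  calc ∑ s ∈ B, ∏ i, pairWeight p h (s i)
      = ∑ s ∈ B.filter wrongX, ∏ i, pairWeight p h (s i)
        + ∑ s ∈ B.filter (¬ wrongX ·), ∏ i, pairWeight p h (s i) :=
        (sum_filter_add_sum_filter_not B wrongX _).symm
    _ ≤ c₁ ^ n + c₂ ^ n :=
      add_le_add (hc₁ n _ fun s hs => (mem_filter.mp hs).2) (hc₂ n _ hwrongY)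
    _ ≤ 2 * max c₁ c₂ ^ n := by
      have := pow_le_pow_left₀ hc₁0.le (le_max_left c₁ c₂) n
      have := pow_le_pow_left₀ hc₂0.le (le_max_right c₁ c₂) n
      linarith

section Model

variable {Ω : Type*} [MeasurableSpace Ω] {P : Measure Ω} {p h : ℝ} {n : ℕ}
  {X Y : Ω → Fin n → ℝ}

lemma measure_eq_prod_pairWeight
    (hXpmf : ∀ x : Fin n → ℝ, (∀ i, x i = 1 ∨ x i = -1) →
      (P {ω | X ω = x}).toReal = ∏ i, exp (h * x i) / (exp h + exp (-h)))
    (hjoint : ∀ x y : Fin n → ℝ, (∀ i, x i = 1 ∨ x i = -1) → (∀ i, y i = 1 ∨ y i = -1) →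
      (P {ω | X ω = x ∧ Y ω = y}).toReal
        = (P {ω | X ω = x}).toReal * ∏ i, (if y i = x i then 1 - p else p))
    (s : Fin n → Bool × Bool) :
    (P {ω | X ω = (fun i => boolSign (s i).1) ∧ Y ω = (fun i => boolSign (s i).2)}).toReal
      = ∏ i, pairWeight p h (s i) := by
  rw [hjoint _ _ (fun i => boolSign_eq_one_or_eq_neg_one _)
    (fun i => boolSign_eq_one_or_eq_neg_one _), hXpmf _ (fun i => boolSign_eq_one_or_eq_neg_one _),
    ← prod_mul_distrib]
  simp only [pairWeight, boolSign_injective.eq_iff]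

lemma measure_isDetectionError_le [IsFiniteMeasure P] (S : ℝ)
    (hXval : ∀ ω i, X ω i = 1 ∨ X ω i = -1) (hYval : ∀ ω i, Y ω i = 1 ∨ Y ω i = -1)
    (hcell : ∀ s : Fin n → Bool × Bool,
      (P {ω | X ω = (fun i => boolSign (s i).1) ∧ Y ω = (fun i => boolSign (s i).2)}).toReal
        = ∏ i, pairWeight p h (s i))
    (B : Finset (Fin n → Bool × Bool))
    (hB : ∀ s, IsDetectionError p S (fun i => boolSign (s i).1) (fun i => boolSign (s i).2) →
      s ∈ B) :
    P {ω | IsDetectionError p S (X ω) (Y ω)}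
      ≤ ENNReal.ofReal (∑ s ∈ B, ∏ i, pairWeight p h (s i)) := by
  let g (s : Fin n → Bool × Bool) := ((fun i => boolSign (s i).1), (fun i => boolSign (s i).2))
  have hrange : ∀ ω, (X ω, Y ω) ∈ Set.range g := fun ω =>
    ⟨fun i => (decide (X ω i = 1), decide (Y ω i = 1)), by
      ext i <;> simp [g, boolSign_decide_eq_one (hXval ω i), boolSign_decide_eq_one (hYval ω i)]⟩
  calc P {ω | IsDetectionError p S (X ω) (Y ω)}
      ≤ ∑ s ∈ B, P ((fun ω => (X ω, Y ω)) ⁻¹' {g s}) :=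
        measure_preimage_le_sum_of_forall_mem P hrange B
          (A := {xy | IsDetectionError p S xy.1 xy.2}) hB
    _ = ENNReal.ofReal (∑ s ∈ B, ∏ i, pairWeight p h (s i)) := by
      rw [ENNReal.ofReal_sum_of_nonneg fun s _ => by rw [← hcell]; positivity]
      refine sum_congr rfl fun s _ => ?_
      rw [← hcell, ENNReal.ofReal_toReal (measure_ne_top _ _)]
      simp [g, Set.preimage, Prod.ext_iff]

end Model

theorem empty_graph_error_decay_general
    {Ω : Type*} [MeasurableSpace Ω] (P : Measure Ω) [IsProbabilityMeasure P]
    (p S h : ℝ) (hp0 : 0 < p) (hp1 : p < 1 / 2)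
    (X Y : (n : ℕ) → Ω → Fin n → ℝ)
    (hXval : ∀ n ω i, X n ω i = 1 ∨ X n ω i = -1)
    (hYval : ∀ n ω i, Y n ω i = 1 ∨ Y n ω i = -1)
    (hXpmf : ∀ n (x : Fin n → ℝ), (∀ i, x i = 1 ∨ x i = -1) →
      (P {ω | X n ω = x}).toReal
        = ∏ i, Real.exp (h * x i) / (Real.exp h + Real.exp (-h)))
    (hjoint : ∀ n (x y : Fin n → ℝ), (∀ i, x i = 1 ∨ x i = -1) →
      (∀ i, y i = 1 ∨ y i = -1) →
      (P {ω | X n ω = x ∧ Y n ω = y}).toReal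
        = (P {ω | X n ω = x}).toReal * ∏ i, (if y i = x i then 1 - p else p))
    (hSh : S ≠ Real.tanh h) :
    limsup (fun n : ℕ =>
        (((n : ℝ)⁻¹ : ℝ) : EReal) * ENNReal.log
          (P {ω | ((∑ i, X n ω i) / n - S) * ((∑ i, Y n ω i) / n - (1 - 2 * p) * S) < 0}))
      atTop < 0
    ∧ Tendsto (fun n : ℕ =>
        (P {ω | ((∑ i, X n ω i) / n - S) * ((∑ i, Y n ω i) / n - (1 - 2 * p) * S) < 0}).toReal)
      atTop (nhds 0) := by
  obtain ⟨c, hc0, hc1, hconf⟩ := exists_lt_one_sum_prod_pairWeight_le h hp0 hp1 hSh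
  have hP : ∀ n,
      P {ω | IsDetectionError p S (X n ω) (Y n ω)} ≤ ENNReal.ofReal (2 * c ^ n) := by
    intro n
    classical
    let B := univ.filter fun s : Fin n → Bool × Bool =>
      IsDetectionError p S (fun i => boolSign (s i).1) (fun i => boolSign (s i).2)
    calc P {ω | IsDetectionError p S (X n ω) (Y n ω)}
        ≤ ENNReal.ofReal (∑ s ∈ B, ∏ i, pairWeight p h (s i)) :=
          measure_isDetectionError_le S (hXval n) (hYval n)
            (measure_eq_prod_pairWeight (hXpmf n) (hjoint n)) B
            fun s hs => mem_filter.mpr ⟨mem_univ s, hs⟩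
      _ ≤ ENNReal.ofReal (2 * c ^ n) :=
          ENNReal.ofReal_le_ofReal (hconf n B fun s hs => (mem_filter.mp hs).2)
  refine ⟨(limsup_inv_mul_log_le_log two_pos hc0 hP).trans_lt
    (EReal.coe_lt_coe_iff.mpr (Real.log_neg hc0 hc1)), ?_⟩
  refine squeeze_zero (fun n => ENNReal.toReal_nonneg)
    (fun n => ENNReal.toReal_le_of_le_ofReal (by positivity) (hP n)) ?_
  simpa using (tendsto_pow_atTop_nhds_zero_of_lt_one hc0.le hc1).const_mul 2

/-- Empty graph (i.i.d. sentiments) model with external influence `h`: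
the sentiments `X n` are i.i.d. `{-1,1}`-valued with `P(X i = 1) = e^h/(e^h + e^{-h})`
(expressed through the product pmf), and the measurements `Y n` are conditionally
independent given `X n` with crossover probability `p`. If the supermajority threshold
satisfies `S ≠ tanh h`, then the detection error probability decays exponentially:
`limsup_{n→∞} (1/n) log P_e^{(n)} < 0` (logarithms in the extended reals), and in
particular `lim_{n→∞} P_e^{(n)} = 0`. -/
theorem empty_graph_error_decay
    {Ω : Type*} [MeasurableSpace Ω] (P : Measure Ω) [IsProbabilityMeasure P]
    (p S h : ℝ) (hp0 : 0 < p) (hp1 : p < 1 / 2) (hS0 : -1 < S) (hS1 : S < 1)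
    (X Y : (n : ℕ) → Ω → Fin n → ℝ)
    (hXval : ∀ n ω i, X n ω i = 1 ∨ X n ω i = -1)
    (hYval : ∀ n ω i, Y n ω i = 1 ∨ Y n ω i = -1)
    (hXmeas : ∀ n, Measurable (X n))
    (hYmeas : ∀ n, Measurable (Y n))
    (hXpmf : ∀ n (x : Fin n → ℝ), (∀ i, x i = 1 ∨ x i = -1) →
      (P {ω | X n ω = x}).toReal
        = ∏ i, Real.exp (h * x i) / (Real.exp h + Real.exp (-h)))
    (hjoint : ∀ n (x y : Fin n → ℝ), (∀ i, x i = 1 ∨ x i = -1) →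
      (∀ i, y i = 1 ∨ y i = -1) →
      (P {ω | X n ω = x ∧ Y n ω = y}).toReal
        = (P {ω | X n ω = x}).toReal * ∏ i, (if y i = x i then 1 - p else p))
    (hSh : S ≠ Real.tanh h) :
    limsup (fun n : ℕ =>
        (((n : ℝ)⁻¹ : ℝ) : EReal) * ENNReal.log
          (P {ω | ((∑ i, X n ω i) / n - S) * ((∑ i, Y n ω i) / n - (1 - 2 * p) * S) < 0}))
      atTop < 0
    ∧ Tendsto (fun n : ℕ =>
        (P {ω | ((∑ i, X n ω i) / n - S) * ((∑ i, Y n ω i) / n - (1 - 2 * p) * S) < 0}).toReal)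
      atTop (nhds 0) :=
  empty_graph_error_decay_general P p S h hp0 hp1 X Y hXval hYval hXpmf hjoint hSh
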